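/- arXiv:0901.3012 — 2 statements merged into one kernel-verified Lean document; each statement's English description precedes it below -/
import Mathlib

section
/- For a meadow M, M satisfies the cancellation axiom (for all u, v, w: u ≠ 0 and u·v = u·w imply v = w) if and only if M satisfies the general inverse law (for all u: u ≠ 0 implies u · u⁻¹ = 1). -/
class Meadow (M : Type*) extends CommRing M, Inv M where
  inv_inv : ∀ u : M, (u⁻¹)⁻¹ = u
  restricted_inv : ∀ u : M, u * (u * u⁻¹) = u

theorem meadow_cancellation_iff_general_inverse (M : Type*) [Meadow M] :
    (∀ u v w : M, u ≠ 0 → u * v = u * w → v = w) ↔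
    (∀ u : M, u ≠ 0 → u * u⁻¹ = 1) := by
  constructor
  · intro hc u hu
    apply hc u _ _ hu
    rw [← mul_assoc, mul_assoc]
    rw [Meadow.restricted_inv u, mul_one]
  · intro hi u v w hu h
    have := hi u hu
    calc v = (u * u⁻¹) * v := by rw [this, one_mul]
      _ = u⁻¹ * (u * v) := by ring
      _ = u⁻¹ * (u * w) := by rw [h]
      _ = (u * u⁻¹) * w := by ring
      _ = w := by rw [this, one_mul]
end

section
/- In a cancellation meadow with 0 ≠ 1, the set B = { u · u⁻¹ : u in M } equals {0, 1}, and B is closed under the operations x ⊗ y = x · y and x ⊕ y = 1 − (1 − x) · (1 − y); under the interpretation where 0 represents 'true' and 1 represents 'false', ⊗ behaves as disjunction and ⊕ as conjunction. -/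
class CancellationMeadow (M : Type*) extends Meadow M where
  general_inverse : ∀ u : M, u ≠ 0 → u * u⁻¹ = 1

theorem cancellation_meadow_boolean_structure (M : Type*) [CancellationMeadow M]
    (sep : (0 : M) ≠ 1) :
    ({x : M | ∃ u : M, x = u * u⁻¹} = {0, 1}) ∧
    (∀ x ∈ ({0, 1} : Set M), ∀ y ∈ ({0, 1} : Set M),
      x * y ∈ ({0, 1} : Set M) ∧ 1 - (1 - x) * (1 - y) ∈ ({0, 1} : Set M)) ∧
    (∀ x ∈ ({0, 1} : Set M), ∀ y ∈ ({0, 1} : Set M),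
      (x * y = 0 ↔ x = 0 ∨ y = 0)) ∧
    (∀ x ∈ ({0, 1} : Set M), ∀ y ∈ ({0, 1} : Set M),
      (1 - (1 - x) * (1 - y) = 0 ↔ x = 0 ∧ y = 0)) := by
  refine ⟨?_, ?_, ?_, ?_⟩
  · ext x
    simp only [Set.mem_setOf_eq, Set.mem_insert_iff, Set.mem_singleton_iff]
    constructor
    · rintro ⟨u, rfl⟩
      by_cases hu : u = 0
      · left; rw [hu, zero_mul]
      · right; exact CancellationMeadow.general_inverse u hu
    · rintro (rfl | rfl)
      · exact ⟨0, (zero_mul _).symm⟩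
      · exact ⟨1, (CancellationMeadow.general_inverse (1 : M) sep.symm).symm⟩
  · rintro x (rfl | rfl) y (rfl | rfl) <;> norm_num
  · rintro x (rfl | rfl) y (rfl | rfl) <;> simp [sep, sep.symm]
  · rintro x (rfl | rfl) y (rfl | rfl) <;> simp [sep, sep.symm]
end
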